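/- Let q > 1 be real and y be real. For every nonzero integer n, one has v_{|n|}(χ_n(y,q), -y, q) = 0; that is, χ_n(y,q) and χ_{-n}(y,q) are the two roots of the quadratic equation v_n(x, -y, q) = 0 for each n ≥ 1. -/
import Mathlib


/-- `χ_n(y,q) = y(q^{n/2}+q^{-n/2})/2 + √(y²+4/(q-1))·(q^{n/2}-q^{-n/2})/2` for `n : ℤ`. -/
noncomputable def chi (q y : ℝ) (n : ℤ) : ℝ :=
  y * (q ^ ((n : ℝ) / 2) + q ^ (-(n : ℝ) / 2)) / 2
    + Real.sqrt (y ^ 2 + 4 / (q - 1)) * (q ^ ((n : ℝ) / 2) - q ^ (-(n : ℝ) / 2)) / 2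

/-- `v_n(x,y,q)`: `v_0 = x + y` and for `n ≥ 1`,
`v_n = x² + y² + xy(q^{n/2} + q^{-n/2}) - (q^n + q^{-n} - 2)/(q-1)`. -/
noncomputable def vfun (q x y : ℝ) (n : ℕ) : ℝ :=
  if n = 0 then x + y
  else x ^ 2 + y ^ 2 + x * y * (q ^ ((n : ℝ) / 2) + q ^ (-(n : ℝ) / 2))
    - (q ^ (n : ℝ) + q ^ (-(n : ℝ)) - 2) / (q - 1)

lemma key (q y a b s : ℝ) (hab : a * b = 1)
    (hs : s ^ 2 = y ^ 2 + 4 / (q - 1)) :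
    (y * (a + b) / 2 + s * (a - b) / 2) ^ 2 + (-y) ^ 2
      + (y * (a + b) / 2 + s * (a - b) / 2) * (-y) * (a + b)
      - (a ^ 2 + b ^ 2 - 2) / (q - 1) = 0 := by
  linear_combination ((a - b) ^ 2 / 4) * hs - (y ^ 2 + 2 / (q - 1)) * hab

theorem stmt9 (q : ℝ) (hq1 : 1 < q) (y : ℝ) (n : ℤ) (hn : n ≠ 0) :
    vfun q (chi q y n) (-y) n.natAbs = 0 := by
  have hq0 : (0 : ℝ) < q := by linarith
  have hs : Real.sqrt (y ^ 2 + 4 / (q - 1)) ^ 2 = y ^ 2 + 4 / (q - 1) := by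
    rw [Real.sq_sqrt]
    have h4 : 0 < 4 / (q - 1) := div_pos (by norm_num) (by linarith)
    nlinarith [sq_nonneg y]
  have hab : q ^ ((n : ℝ) / 2) * q ^ (-(n : ℝ) / 2) = 1 := by
    rw [← Real.rpow_add hq0]; ring_nf; exact Real.rpow_zero q
  have hm : n.natAbs ≠ 0 := Int.natAbs_ne_zero.mpr hn
  rw [vfun, if_neg hm, chi]
  rcases lt_or_gt_of_ne hn with h | h
  · have hcast : (n.natAbs : ℝ) = -(n : ℝ) := by
      rw [Nat.cast_natAbs]
      rw [abs_of_neg h]; push_cast; ring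
    rw [hcast]
    have h1 : q ^ (-(n : ℝ) / 2 + -(n : ℝ) / 2) = q ^ (-(n : ℝ) / 2) * q ^ (-(n : ℝ) / 2) :=
      Real.rpow_add hq0 _ _
    have h2 : q ^ ((n : ℝ) / 2 + (n : ℝ) / 2) = q ^ ((n : ℝ) / 2) * q ^ ((n : ℝ) / 2) :=
      Real.rpow_add hq0 _ _
    have e1 : q ^ (-(n : ℝ)) = q ^ (-(n : ℝ) / 2) * q ^ (-(n : ℝ) / 2) := by
      rw [← h1]; ring_nf
    have e2 : q ^ (- -(n : ℝ)) = q ^ ((n : ℝ) / 2) * q ^ ((n : ℝ) / 2) := by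
      rw [← h2]; ring_nf
    have e3 : - -(n : ℝ) / 2 = (n : ℝ) / 2 := by ring
    rw [e3, e1, e2]
    linear_combination key q y (q ^ ((n : ℝ) / 2)) (q ^ (-(n : ℝ) / 2))
      (Real.sqrt (y ^ 2 + 4 / (q - 1))) hab hs
  · have hcast : (n.natAbs : ℝ) = (n : ℝ) := by
      rw [Nat.cast_natAbs]
      rw [abs_of_pos h]
    rw [hcast]
    have h1 : q ^ (-(n : ℝ) / 2 + -(n : ℝ) / 2) = q ^ (-(n : ℝ) / 2) * q ^ (-(n : ℝ) / 2) :=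
      Real.rpow_add hq0 _ _
    have h2 : q ^ ((n : ℝ) / 2 + (n : ℝ) / 2) = q ^ ((n : ℝ) / 2) * q ^ ((n : ℝ) / 2) :=
      Real.rpow_add hq0 _ _
    have e1 : q ^ (-(n : ℝ)) = q ^ (-(n : ℝ) / 2) * q ^ (-(n : ℝ) / 2) := by
      rw [← h1]; ring_nf
    have e2 : q ^ ((n : ℝ)) = q ^ ((n : ℝ) / 2) * q ^ ((n : ℝ) / 2) := by
      rw [← h2]; ring_nf
    rw [e1, e2]
    linear_combination key q y (q ^ ((n : ℝ) / 2)) (q ^ (-(n : ℝ) / 2))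
      (Real.sqrt (y ^ 2 + 4 / (q - 1))) hab hs
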